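/- arXiv:1102.3629 — 2 statements merged into one kernel-verified Lean document; each statement's English description precedes it below -/
import Mathlib

section
/- For x = cos t ∈ [−1,1] and each j, the fundamental Lagrange polynomial for the modified Chebyshev points satisfies |ℓ(𝒯_d^{(β)}, cos β_j; x)| ≤ (1/(d|sin dβ|)) · ( |sin(d(t−β)/2)/sin((t−β_j)/2)| + |sin(d(t+β)/2)/sin((t+β_j)/2)| ), whenever the denominators are nonzero. -/
/-!
With `z = exp (i t)` and `w = exp (i β)`, the identity `2 cos s = u + u⁻¹` (for `u = exp (i s)`)
and the factorisation of `X ^ d - Y ^ d` over the `d`-th roots of unity give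
`∏ₖ (2 cos t - 2 cos βₖ) = 2 cos (d t) - 2 cos (d β)`.
Differentiating at `t = βⱼ` yields `sin βⱼ * ∏_{k ≠ j} (2 cos βⱼ - 2 cos βₖ) = d sin (d β)`,
which also shows that the nodes are distinct. Hence
`ℓⱼ(cos t) = sin βⱼ (cos (d t) - cos (d β)) / (d sin (d β) (cos t - cos βⱼ))`.
Writing both differences of cosines as products of half-angle sines and expanding
`sin βⱼ = sin ((t + βⱼ)/2) cos ((t - βⱼ)/2) - cos ((t + βⱼ)/2) sin ((t - βⱼ)/2)`
splits this into two terms, each bounded by one of the two quotients.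
-/

open Real Finset

/-- The modified Chebyshev points of degree `d` with parameter `β`. -/
noncomputable def modCheb (d : ℕ) (β : ℝ) : Finset ℝ :=
  (Finset.range d).image (fun j : ℕ => Real.cos (β + 2 * j * π / d))

/-- The fundamental Lagrange interpolation polynomial (as a function) at node `a`. -/
noncomputable def lagBasis (A : Finset ℝ) (a : ℝ) (x : ℝ) : ℝ :=
  ∏ b ∈ A.erase a, (x - b) / (a - b)

theorem pow_sub_pow_eq_prod_range {R : Type*} [CommRing R] [IsDomain R] {n : ℕ} (hn : 0 < n)
    {ζ : R} (hζ : IsPrimitiveRoot ζ n) (z α : R) :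
    z ^ n - α ^ n = ∏ k ∈ range n, (z - ζ ^ k * α) := by
  simpa [Polynomial.eval_prod] using
    congrArg (Polynomial.eval z) (X_pow_sub_C_eq_prod hζ hn rfl)

theorem add_inv_sub_add_inv {K : Type*} [Field K] {z u : K} (hz : z ≠ 0) (hu : u ≠ 0) :
    z + z⁻¹ - (u + u⁻¹) = z⁻¹ * ((z - u) * (z - u⁻¹)) := by
  field_simp
  ring

theorem prod_add_inv_sub_add_inv {K : Type*} [Field K] {n : ℕ} (hn : 0 < n) {ζ : K}
    (hζ : IsPrimitiveRoot ζ n) {z w : K} (hz : z ≠ 0) (hw : w ≠ 0) :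
    ∏ k ∈ range n, (z + z⁻¹ - (ζ ^ k * w + (ζ ^ k * w)⁻¹)) =
      z ^ n + (z ^ n)⁻¹ - (w ^ n + (w ^ n)⁻¹) := by
  rw [add_inv_sub_add_inv (pow_ne_zero n hz) (pow_ne_zero n hw), ← inv_pow z n, ← inv_pow w n,
    pow_sub_pow_eq_prod_range hn hζ z w, pow_sub_pow_eq_prod_range hn hζ.inv z,
    ← prod_mul_distrib, show z⁻¹ ^ n = z⁻¹ ^ #(range n) by rw [card_range], pow_card_mul_prod]
  refine prod_congr rfl fun k _ => ?_
  have hζk : ζ ^ k ≠ 0 := pow_ne_zero k (hζ.ne_zero hn.ne')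
  rw [add_inv_sub_add_inv hz (mul_ne_zero hζk hw), mul_inv, inv_pow]

theorem prod_two_cos_sub_two_cos {d : ℕ} (hd : 0 < d) (t β : ℝ) :
    ∏ k ∈ range d, (2 * cos t - 2 * cos (β + 2 * k * π / d)) =
      2 * cos (d * t) - 2 * cos (d * β) := by
  have htwo_cos (x : ℝ) : ((2 * cos x : ℝ) : ℂ) =
      Complex.exp (x * Complex.I) + (Complex.exp (x * Complex.I))⁻¹ := by
    rw [← Complex.exp_neg, ← neg_mul]; push_cast; exact Complex.two_cos _
  have hζ : IsPrimitiveRoot (Complex.exp (2 * π * Complex.I / d)) d :=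
    Complex.isPrimitiveRoot_exp d hd.ne'
  have hnode (k : ℕ) : Complex.exp (((β + 2 * k * π / d : ℝ) : ℂ) * Complex.I) =
      Complex.exp (2 * π * Complex.I / d) ^ k * Complex.exp (β * Complex.I) := by
    rw [← Complex.exp_nat_mul, ← Complex.exp_add]; push_cast; ring_nf
  have hpow (x : ℝ) :
      Complex.exp (x * Complex.I) ^ d = Complex.exp (((d * x : ℝ) : ℂ) * Complex.I) := by
    rw [← Complex.exp_nat_mul]; push_cast; ring_nf
  apply Complex.ofReal_injective
  simp only [Complex.ofReal_prod, Complex.ofReal_sub, htwo_cos, hnode]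
  rw [prod_add_inv_sub_add_inv hd hζ (Complex.exp_ne_zero _) (Complex.exp_ne_zero _), hpow, hpow]

theorem two_cos_sub_mul_prod_erase {d j : ℕ} (hj : j < d) (t β : ℝ) :
    (2 * cos t - 2 * cos (β + 2 * j * π / d)) *
        ∏ k ∈ (range d).erase j, (2 * cos t - 2 * cos (β + 2 * k * π / d)) =
      2 * cos (d * t) - 2 * cos (d * β) :=
  (mul_prod_erase (range d) (fun k : ℕ => 2 * cos t - 2 * cos (β + 2 * k * π / d))
    (mem_range.2 hj)).trans (prod_two_cos_sub_two_cos (j.zero_le.trans_lt hj) t β)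

theorem sin_mul_prod_erase_two_cos_sub_two_cos {d j : ℕ} (hj : j < d) (β : ℝ) :
    sin (β + 2 * j * π / d) *
        ∏ k ∈ (range d).erase j,
          (2 * cos (β + 2 * j * π / d) - 2 * cos (β + 2 * k * π / d)) =
      d * sin (d * β) := by
  set βj := β + 2 * j * π / d
  set g : ℝ → ℝ := fun t =>
    ∏ k ∈ (range d).erase j, (2 * cos t - 2 * cos (β + 2 * k * π / d))
  have hdβj : sin (d * βj) = sin (d * β) := by
    have hd : (d : ℝ) ≠ 0 := Nat.cast_ne_zero.2 (by omega)
    rw [← sin_add_nat_mul_two_pi (d * β) j]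
    congr 1
    simp only [βj]
    field_simp
  have hlhs := (((hasDerivAt_cos βj).const_mul 2).sub_const (2 * cos βj)).fun_mul
    (show DifferentiableAt ℝ g βj by fun_prop).hasDerivAt
  have hrhs := ((((hasDerivAt_id βj).const_mul (d : ℝ)).cos).const_mul 2).sub_const
    (2 * cos (d * β))
  rw [show (fun t => (2 * cos t - 2 * cos βj) * g t) = fun t => 2 * cos (d * t) - 2 * cos (d * β)
    from funext fun t => two_cos_sub_mul_prod_erase hj t β] at hlhs
  have := hlhs.unique hrhs
  simp only [sub_self, zero_mul, add_zero, mul_one, id, hdβj] at this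
  linarith

theorem injOn_cos_modCheb {d : ℕ} {β : ℝ} (hβ : sin (d * β) ≠ 0) :
    Set.InjOn (fun k : ℕ => cos (β + 2 * k * π / d)) (range d) := by
  intro k hk l hl hkl
  by_contra hne
  have hd : (d : ℝ) ≠ 0 := Nat.cast_ne_zero.2 (Nat.ne_zero_of_lt (mem_range.1 hk))
  have hzero := prod_eq_zero
    (f := fun m : ℕ => 2 * cos (β + 2 * k * π / d) - 2 * cos (β + 2 * m * π / d))
    (mem_erase.2 ⟨Ne.symm hne, hl⟩) (by simp only at hkl ⊢; rw [hkl, sub_self])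
  have := sin_mul_prod_erase_two_cos_sub_two_cos (mem_range.1 hk) β
  rw [hzero, mul_zero] at this
  exact mul_ne_zero hd hβ this.symm

theorem lagBasis_image {ι : Type*} [DecidableEq ι] {s : Finset ι} {f : ι → ℝ}
    (hf : Set.InjOn f s) {i : ι} (hi : i ∈ s) (x : ℝ) :
    lagBasis (s.image f) (f i) x = ∏ k ∈ s.erase i, (x - f k) / (f i - f k) := by
  have herase : (s.image f).erase (f i) = (s.erase i).image f := by
    ext y
    simp only [mem_erase, mem_image]
    constructor
    · rintro ⟨hy, k, hk, rfl⟩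
      exact ⟨k, ⟨fun hki => hy (hki ▸ rfl), hk⟩, rfl⟩
    · rintro ⟨k, ⟨hki, hk⟩, rfl⟩
      exact ⟨fun h => hki (hf hk hi h), k, hk, rfl⟩
  rw [lagBasis, herase, prod_image (hf.mono (coe_subset.2 (s.erase_subset i)))]

theorem lagBasis_modCheb_eq {d j : ℕ} (hj : j < d) {β : ℝ} (hβ : sin (d * β) ≠ 0) {t : ℝ}
    (ht : cos t ≠ cos (β + 2 * j * π / d)) :
    lagBasis (modCheb d β) (cos (β + 2 * j * π / d)) (cos t) =
      sin (β + 2 * j * π / d) * (cos (d * t) - cos (d * β)) /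
        (d * sin (d * β) * (cos t - cos (β + 2 * j * π / d))) := by
  have hd : (d : ℝ) ≠ 0 := Nat.cast_ne_zero.2 (by omega)
  have hnum := two_cos_sub_mul_prod_erase hj t β
  have hden := sin_mul_prod_erase_two_cos_sub_two_cos hj β
  set N := ∏ k ∈ (range d).erase j, (2 * cos t - 2 * cos (β + 2 * k * π / d))
  set D := ∏ k ∈ (range d).erase j,
    (2 * cos (β + 2 * j * π / d) - 2 * cos (β + 2 * k * π / d))
  have hratio : ∏ k ∈ (range d).erase j,
      (cos t - cos (β + 2 * k * π / d)) /
        (cos (β + 2 * j * π / d) - cos (β + 2 * k * π / d)) =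
        N / D := by
    rw [← prod_div_distrib]
    refine prod_congr rfl fun k _ => ?_
    rw [← mul_sub, ← mul_sub, mul_div_mul_left _ _ two_ne_zero]
  rw [modCheb, lagBasis_image (injOn_cos_modCheb hβ) (mem_range.2 hj), hratio]
  have hD : D ≠ 0 := fun h => mul_ne_zero hd hβ (by rw [← hden, h, mul_zero])
  rw [div_eq_div_iff hD (mul_ne_zero (mul_ne_zero hd hβ) (sub_ne_zero.2 ht))]
  linear_combination (-(N * (cos t - cos (β + 2 * j * π / d)))) * hden +
    (sin (β + 2 * j * π / d) * D / 2) * hnum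

theorem abs_mul_sub_mul_le {a b x y : ℝ} (hx : |x| ≤ 1) (hy : |y| ≤ 1) :
    |a * x - b * y| ≤ |a| + |b| :=
  (abs_sub _ _).trans <| add_le_add
    (by rw [abs_mul]; exact mul_le_of_le_one_right (abs_nonneg a) hx)
    (by rw [abs_mul]; exact mul_le_of_le_one_right (abs_nonneg b) hy)

theorem abs_sin_mul_sin_mul_sin_div_le {u v : ℝ} (hp : sin ((u + v) / 2) ≠ 0)
    (hm : sin ((u - v) / 2) ≠ 0) (A B : ℝ) :
    |sin v * sin A * sin B / (sin ((u + v) / 2) * sin ((u - v) / 2))| ≤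
      |sin B / sin ((u - v) / 2)| + |sin A / sin ((u + v) / 2)| := by
  have hv : sin v =
      sin ((u + v) / 2) * cos ((u - v) / 2) - cos ((u + v) / 2) * sin ((u - v) / 2) := by
    rw [← sin_sub]; ring_nf
  have hunit (x y : ℝ) : |sin x * cos y| ≤ 1 := by
    rw [abs_mul]; exact mul_le_one₀ (abs_sin_le_one x) (abs_nonneg _) (abs_cos_le_one y)
  rw [hv, show (sin ((u + v) / 2) * cos ((u - v) / 2) - cos ((u + v) / 2) * sin ((u - v) / 2)) *
      sin A * sin B / (sin ((u + v) / 2) * sin ((u - v) / 2)) =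
      sin B / sin ((u - v) / 2) * (sin A * cos ((u - v) / 2)) -
        sin A / sin ((u + v) / 2) * (sin B * cos ((u + v) / 2)) by field_simp]
  exact abs_mul_sub_mul_le (hunit _ _) (hunit _ _)

theorem lagBasis_modCheb_bound_general (d : ℕ) (β : ℝ)
    (hβ : Real.sin (d * β) ≠ 0) (j : ℕ) (hj : j < d) (t : ℝ)
    (h1 : Real.sin ((t + (β + 2 * j * π / d)) / 2) ≠ 0)
    (h2 : Real.sin ((t - (β + 2 * j * π / d)) / 2) ≠ 0) :
    |lagBasis (modCheb d β) (Real.cos (β + 2 * j * π / d)) (Real.cos t)| ≤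
      (1 / (d * |Real.sin (d * β)|)) *
        (|Real.sin (d * (t - β) / 2) / Real.sin ((t - (β + 2 * j * π / d)) / 2)| +
         |Real.sin (d * (t + β) / 2) / Real.sin ((t + (β + 2 * j * π / d)) / 2)|) := by
  have hne : cos t ≠ cos (β + 2 * j * π / d) := by
    rw [Ne, ← sub_eq_zero, cos_sub_cos]; simp [h1, h2]
  rw [lagBasis_modCheb_eq hj hβ hne, cos_sub_cos, cos_sub_cos, ← mul_add, ← mul_sub,
    show ∀ a b c e f g h : ℝ, a * (-2 * b * c) / (e * f * (-2 * g * h)) =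
      1 / (e * f) * (a * b * c / (g * h)) from fun _ _ _ _ _ _ _ => by field_simp,
    abs_mul, abs_div, abs_one, abs_mul, Nat.abs_cast]
  exact mul_le_mul_of_nonneg_left (abs_sin_mul_sin_mul_sin_div_le h1 h2 _ _) (by positivity)

theorem lagBasis_modCheb_bound (d : ℕ) (hd : 1 ≤ d) (β : ℝ)
    (hβ : Real.sin (d * β) ≠ 0) (j : ℕ) (hj : j < d) (t : ℝ)
    (h1 : Real.sin ((t + (β + 2 * j * π / d)) / 2) ≠ 0)
    (h2 : Real.sin ((t - (β + 2 * j * π / d)) / 2) ≠ 0) :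
    |lagBasis (modCheb d β) (Real.cos (β + 2 * j * π / d)) (Real.cos t)| ≤
      (1 / (d * |Real.sin (d * β)|)) *
        (|Real.sin (d * (t - β) / 2) / Real.sin ((t - (β + 2 * j * π / d)) / 2)| +
         |Real.sin (d * (t + β) / 2) / Real.sin ((t + (β + 2 * j * π / d)) / 2)|) :=
  lagBasis_modCheb_bound_general d β hβ j hj t h1 h2
end

section
/- Let X = (x_k) be an ℝ-Leja sequence and 2^n + 1 < k ≤ 2^{n+1}. Set A = 𝓛_{2^n} and let B = {x_j : 2^n+1 ≤ j ≤ k−1}. Then for every x ∈ [−1,1] and b ∈ B: |w_A(x)| / |w_A(b)| ≤ 1 / sin(π/2^{n+1}), where w_A(y) = ∏_{a∈A}(y − a). -/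
open Finset Real

/-- A Leja sequence for the unit disk `D = {|z| ≤ 1}`: it starts at `1`, stays in `D`,
and each point maximizes the product of distances to the previous points over `D`. -/
def IsLejaSeq (e : ℕ → ℂ) : Prop :=
  e 0 = 1 ∧ (∀ k, ‖e k‖ ≤ 1) ∧
    ∀ j, 1 ≤ j → ∀ z : ℂ, ‖z‖ ≤ 1 →
      ∏ m ∈ Finset.range j, ‖z - e m‖ ≤
        ∏ m ∈ Finset.range j, ‖e j - e m‖

/-- An ℝ-Leja sequence: the sequence of real parts of a Leja sequence for the unit
disk, with repeated values eliminated (keeping first occurrences, in order). -/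
def IsRLejaSeq (x : ℕ → ℝ) : Prop :=
  ∃ (e : ℕ → ℂ) (φ : ℕ → ℕ), IsLejaSeq e ∧ StrictMono φ ∧
    (∀ k, x k = (e (φ k)).re) ∧
    ∀ m : ℕ, (m ∈ Set.range φ ↔ ∀ s, s < m → (e m).re ≠ (e s).re)

/-- The Chebyshev–Lobatto points of degree `d`. -/
noncomputable def lobatto (d : ℕ) : Finset ℝ :=
  (Finset.range (d + 1)).image (fun j : ℕ => Real.cos (j * π / d))

/-!
The first `2^p` points of a Leja sequence for the unit disk are the `2^p`-th roots of unity and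
the next `2^p` points are `2^p`-th roots of `-1`. Indeed, the nodal polynomial of the first block
is `z^(2^p) - 1`, whose modulus on the disk is largest exactly where `z^(2^p) = -1`, and the
second block is again a Leja sequence, up to a rotation. So the real parts of the first
`2^(p+1)` points are the Chebyshev–Lobatto points of degree `2^p`; counting distinct real parts
shows that `x j`, for `2^n < j < 2^(n+1)`, is the real part of a `2^(n+1)`-th root of `-1`, i.e.
`T_(2d) (x j) = -1` with `d = 2^n`. Finally `w_A (cos θ) = -2^(1-d) sin θ sin (dθ)`, via the
Chebyshev polynomial `U_(d-1)`: this is at most `2^(1-d)` in absolute value on `[-1, 1]` and at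
least `2^(1-d) sin (π/2d)` at the zeros of `T_(2d) + 1`.
-/

open Polynomial Polynomial.Chebyshev Metric

lemma injOn_cos_nat_mul_pi_div (d : ℕ) :
    Set.InjOn (fun j : ℕ => cos (j * π / d)) (range (d + 1)) := by
  intro a ha b hb hab
  simp only [coe_range, Set.mem_Iio] at ha hb
  rcases Nat.eq_zero_or_pos d with rfl | hd
  · omega
  have hmem : ∀ c : ℕ, c < d + 1 → c * π / d ∈ Set.Icc 0 π := fun c hc =>
    ⟨by positivity, by
      rw [div_le_iff₀ (by positivity), mul_comm π]; gcongr; exact_mod_cast Nat.lt_succ_iff.1 hc⟩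
  have := injOn_cos (hmem a ha) (hmem b hb) hab
  field_simp at this
  exact_mod_cast this

lemma card_lobatto (d : ℕ) : #(lobatto d) = d + 1 := by
  rw [lobatto, card_image_of_injOn (injOn_cos_nat_mul_pi_div d), card_range]

lemma eval_U_real_eq_prod (n : ℕ) (x : ℝ) :
    (U ℝ n).eval x = 2 ^ n * ∏ k ∈ range n, (x - cos ((k + 1) * π / (n + 1))) := by
  have hinj : Set.InjOn (fun k : ℕ => cos ((k + 1) * π / (n + 1))) (range n) :=
    (range n).nodup_map_iff_injOn.mp (roots_U_real_nodup n)
  have hcard : Multiset.card (U ℝ n).roots = (U ℝ n).natDegree := by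
    rw [roots_U_real, natDegree_U_natCast, card_val, card_image_of_injOn hinj, card_range]
  conv_lhs => rw [← C_leadingCoeff_mul_prod_multiset_X_sub_C hcard]
  rw [eval_mul, eval_C, leadingCoeff_U_natCast, eval_multiset_prod, roots_U_real,
    Multiset.map_map]
  simp only [Function.comp_def, eval_sub, eval_X, eval_C]
  rw [← prod_eq_multiset_prod, prod_image hinj]

lemma prod_lobatto_sub (n : ℕ) (x : ℝ) :
    ∏ a ∈ lobatto (n + 1), (x - a) = (x ^ 2 - 1) * (U ℝ n).eval x / 2 ^ n := by
  rw [lobatto, prod_image (injOn_cos_nat_mul_pi_div _), eval_U_real_eq_prod, prod_range_succ,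
    prod_range_succ']
  push_cast
  rw [show ((n : ℝ) + 1) * π / (n + 1) = π by field_simp, cos_pi, zero_mul, zero_div, cos_zero]
  generalize ∏ k ∈ range n, (x - cos ((k + 1) * π / (n + 1))) = P
  field_simp
  ring

lemma prod_lobatto_sub_cos {d : ℕ} (hd : d ≠ 0) (θ : ℝ) :
    ∏ a ∈ lobatto d, (cos θ - a) = -(sin θ * sin (d * θ)) / 2 ^ (d - 1) := by
  obtain ⟨n, rfl⟩ := Nat.exists_eq_add_one_of_ne_zero hd
  have hU := U_real_cos θ n
  push_cast at hU ⊢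
  rw [prod_lobatto_sub, ← hU, ← sin_sq_add_cos_sq θ]
  ring

lemma abs_prod_lobatto_sub_le {d : ℕ} (hd : d ≠ 0) {y : ℝ} (hy : y ∈ Set.Icc (-1 : ℝ) 1) :
    |∏ a ∈ lobatto d, (y - a)| ≤ 1 / 2 ^ (d - 1) := by
  rw [← cos_arccos hy.1 hy.2, prod_lobatto_sub_cos hd, abs_div, abs_neg, abs_mul, abs_pow,
    abs_two]
  gcongr
  exact mul_le_one₀ (abs_sin_le_one _) (abs_nonneg _) (abs_sin_le_one _)

lemma sin_pi_div_le_sin_odd_mul {N k : ℕ} (hk : Odd k) (hkN : k ≤ 2 * N) :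
    sin (π / (2 * N)) ≤ sin (k * π / (2 * N)) := by
  obtain ⟨m, rfl⟩ := hk
  have hN : (0 : ℝ) < N := by exact_mod_cast (show 0 < N by omega)
  have hkN' : ((2 * m + 1 : ℕ) : ℝ) + 1 ≤ 2 * N := by
    exact_mod_cast (show 2 * m + 1 + 1 ≤ 2 * N by omega)
  have hmem : ∀ r : ℝ, 0 ≤ r → r ≤ 2 * N → r * π / (2 * N) ∈ Set.Icc 0 π := fun r h0 h1 =>
    ⟨by positivity, by rw [div_le_iff₀ (by positivity)]; nlinarith [pi_pos]⟩
  have := strictConcaveOn_sin_Icc.concaveOn.min_le_of_mem_Icc (hmem 1 one_pos.le (by linarith))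
    (hmem (2 * N - 1) (by linarith) (by linarith)) (z := ((2 * m + 1 : ℕ) : ℝ) * π / (2 * N))
    ⟨by gcongr; norm_cast; omega, by gcongr; linarith⟩
  rwa [show (2 * N - 1) * π / (2 * N) = π - 1 * π / (2 * N) by field_simp, sin_pi_sub,
    min_self, one_mul] at this

lemma sin_div_le_abs_prod_lobatto_sub {d : ℕ} (hd : d ≠ 0) {x : ℝ}
    (hx : (T ℝ (2 * d : ℕ)).eval x = -1) :
    sin (π / (2 * d)) / 2 ^ (d - 1) ≤ |∏ a ∈ lobatto d, (x - a)| := by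
  obtain ⟨k, hk, hodd, rfl⟩ := (eval_T_real_eq_neg_one_iff (by omega) x).1 hx
  have hdk : (d : ℝ) * (k * π / ((2 * d : ℕ) : ℝ)) = k * π / 2 := by push_cast; field_simp
  have hsin : |sin (k * π / 2)| = 1 := by
    obtain ⟨m, rfl⟩ := hodd
    exact abs_sin_eq_one_iff.2 ⟨m, by push_cast; ring⟩
  rw [prod_lobatto_sub_cos hd, hdk, abs_div, abs_neg, abs_mul, hsin, mul_one, abs_pow, abs_two]
  push_cast
  gcongr
  exact (sin_pi_div_le_sin_odd_mul hodd hk).trans (le_abs_self _)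

lemma norm_eq_one_of_pow_eq {a b : ℂ} {n : ℕ} (hn : n ≠ 0) (hb : ‖b‖ = 1) (h : a ^ n = b) :
    ‖a‖ = 1 :=
  (pow_eq_one_iff_of_nonneg (norm_nonneg a) hn).1 (by rw [← norm_pow, h, hb])

lemma eval_T_real_re (n : ℕ) {z : ℂ} (hz : ‖z‖ = 1) : (T ℝ n).eval z.re = (z ^ n).re := by
  have hz' : z = Complex.exp (z.arg * Complex.I) := by
    simpa [hz] using (Complex.norm_mul_exp_arg_mul_I z).symm
  rw [hz', ← Complex.exp_nat_mul, Complex.exp_ofReal_mul_I_re, ← mul_assoc,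
    ← Complex.ofReal_natCast, ← Complex.ofReal_mul, Complex.exp_ofReal_mul_I_re]
  exact_mod_cast T_real_cos z.arg n

lemma image_re_nthRootsFinset {d : ℕ} (hd : d ≠ 0) :
    (nthRootsFinset (2 * d) (1 : ℂ)).image Complex.re = lobatto d := by
  have h2d : 0 < 2 * d := by omega
  ext x
  simp only [mem_image, mem_nthRootsFinset h2d, lobatto, mem_range]
  constructor
  · rintro ⟨z, hz, rfl⟩
    have hT : (T ℝ (2 * d : ℕ)).eval z.re = 1 := by
      rw [eval_T_real_re _ (norm_eq_one_of_pow_eq h2d.ne' norm_one hz), hz, Complex.one_re]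
    obtain ⟨k, hk, ⟨j, rfl⟩, hx⟩ := (eval_T_real_eq_one_iff h2d.ne' _).1 hT
    exact ⟨j, by omega, by rw [hx]; push_cast; congr 1; field_simp; ring⟩
  · rintro ⟨j, -, rfl⟩
    refine ⟨Complex.exp ((j * π / d : ℝ) * Complex.I), ?_, Complex.exp_ofReal_mul_I_re _⟩
    rw [← Complex.exp_nat_mul, Complex.exp_eq_one_iff]
    exact ⟨j, by push_cast; field_simp⟩

lemma eq_neg_of_two_le_norm_sub {a c : ℂ} (ha : ‖a‖ ≤ 1) (hc : ‖c‖ = 1) (h : 2 ≤ ‖a - c‖) :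
    a = -c := by
  have hle := norm_sub_le a c
  rw [hc] at hle
  have hadd : ‖a + -c‖ = ‖a‖ + ‖-c‖ := by
    rw [← sub_eq_add_neg, norm_neg, hc]
    linarith
  have hnorm : ‖a‖ = ‖-c‖ := by
    rw [norm_neg, hc]
    linarith
  exact (sameRay_iff_norm_add.2 hadd).eq_of_norm_eq hnorm

lemma prod_sub_eq_pow_sub {f : ℕ → ℂ} {N : ℕ} {c : ℂ} (hN : N ≠ 0)
    (hinj : Set.InjOn f (range N)) (hf : ∀ s < N, f s ^ N = c) (z : ℂ) :
    ∏ s ∈ range N, (z - f s) = z ^ N - c := by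
  have hroots : ((range N).image f).val = (X ^ N - C c).roots := by
    refine Multiset.eq_of_le_of_card_le ((Multiset.le_iff_subset (nodup _)).2 fun a ha => ?_) ?_
    · rw [Finset.mem_val, mem_image] at ha
      obtain ⟨s, hs, rfl⟩ := ha
      rw [mem_roots (X_pow_sub_C_ne_zero (Nat.pos_of_ne_zero hN) c)]
      simp [hf s (mem_range.1 hs)]
    · rw [card_val, card_image_of_injOn hinj, card_range]
      exact (card_roots' _).trans natDegree_X_pow_sub_C.le
  have hprod := prod_multiset_X_sub_C_of_monic_of_roots_card_eq (monic_X_pow_sub_C c hN)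
    (by rw [← hroots, card_val, card_image_of_injOn hinj, card_range, natDegree_X_pow_sub_C])
  rw [← hroots, ← prod_eq_multiset_prod, prod_image hinj] at hprod
  simpa [eval_prod] using congrArg (eval z) hprod

noncomputable def nodalNorm (f : ℕ → ℂ) (j : ℕ) (z : ℂ) : ℝ := ∏ s ∈ range j, ‖z - f s‖

@[simp]
lemma nodalNorm_zero (f : ℕ → ℂ) (z : ℂ) : nodalNorm f 0 z = 1 := prod_range_zero _

lemma isMaxOn_nodalNorm_zero (f : ℕ → ℂ) (s : Set ℂ) (a : ℂ) : IsMaxOn (nodalNorm f 0) s a :=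
  fun z _ => by simp

lemma continuous_nodalNorm (f : ℕ → ℂ) (j : ℕ) : Continuous (nodalNorm f j) := by
  unfold nodalNorm
  fun_prop

lemma nodalNorm_add (f : ℕ → ℂ) (N t : ℕ) (z : ℂ) :
    nodalNorm f (N + t) z = nodalNorm f N z * nodalNorm (fun s => f (N + s)) t z :=
  prod_range_add _ _ _

lemma nodalNorm_update_of_le (f : ℕ → ℂ) {j t : ℕ} (hj : j ≤ t) (u : ℂ) :
    nodalNorm (Function.update f t u) j = nodalNorm f j := by
  funext z
  refine prod_congr rfl fun s hs => ?_
  rw [Function.update_of_ne (by simp at hs; omega)]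

/-- Allowing any starting point on the unit circle makes the notion rotation invariant, so that a
dyadic block of a Leja sequence is again one. -/
def IsLejaPrefix (f : ℕ → ℂ) (L : ℕ) : Prop :=
  ‖f 0‖ = 1 ∧ ∀ j < L, f j ∈ closedBall 0 1 ∧ IsMaxOn (nodalNorm f j) (closedBall 0 1) (f j)

lemma IsLejaSeq.isLejaPrefix {e : ℕ → ℂ} (he : IsLejaSeq e) (L : ℕ) : IsLejaPrefix e L := by
  obtain ⟨h0, hnorm, hmax⟩ := he
  refine ⟨by simp [h0], fun j _ => ⟨mem_closedBall_zero_iff.2 (hnorm j), fun z hz => ?_⟩⟩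
  rcases Nat.eq_zero_or_pos j with rfl | hj
  · exact isMaxOn_nodalNorm_zero e _ _ hz
  · exact hmax j hj z (mem_closedBall_zero_iff.1 hz)

lemma IsLejaPrefix.mono {f : ℕ → ℂ} {L L' : ℕ} (hf : IsLejaPrefix f L) (h : L' ≤ L) :
    IsLejaPrefix f L' :=
  ⟨hf.1, fun j hj => hf.2 j (by omega)⟩

lemma IsLejaPrefix.succ {f : ℕ → ℂ} {L : ℕ} (hf : IsLejaPrefix f L) (hmem : f L ∈ closedBall 0 1)
    (hmax : IsMaxOn (nodalNorm f L) (closedBall 0 1) (f L)) : IsLejaPrefix f (L + 1) := by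
  refine ⟨hf.1, fun j hj => ?_⟩
  rcases Nat.lt_succ_iff_lt_or_eq.1 hj with hj | rfl
  exacts [hf.2 j hj, ⟨hmem, hmax⟩]

lemma IsLejaPrefix.update {f : ℕ → ℂ} {t : ℕ} (hf : IsLejaPrefix f t) (ht : t ≠ 0) {u : ℂ}
    (hmem : u ∈ closedBall 0 1) (hmax : IsMaxOn (nodalNorm f t) (closedBall 0 1) u) :
    IsLejaPrefix (Function.update f t u) (t + 1) := by
  refine IsLejaPrefix.succ ⟨?_, fun j hj => ?_⟩ (by simpa using hmem)
    (by simpa [nodalNorm_update_of_le])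
  · rw [Function.update_of_ne (Ne.symm ht), hf.1]
  · rw [Function.update_of_ne hj.ne, nodalNorm_update_of_le f hj.le]
    exact hf.2 j hj

lemma IsLejaPrefix.pow_eq_neg_of_isMaxOn {f : ℕ → ℂ} {N t : ℕ} {c w : ℂ}
    (hf : IsLejaPrefix f (N + t + 1)) (hroots : ∀ z, ∏ s ∈ range N, (z - f s) = z ^ N - c)
    (hc : ‖c‖ = 1) (hw : w ∈ closedBall 0 1) (hwN : w ^ N = -c)
    (hmax : IsMaxOn (nodalNorm (fun s => f (N + s)) t) (closedBall 0 1) w)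
    (hpos : 0 < nodalNorm (fun s => f (N + s)) t w) :
    f (N + t) ^ N = -c ∧
      IsMaxOn (nodalNorm (fun s => f (N + s)) t) (closedBall 0 1) (f (N + t)) := by
  set H := nodalNorm (fun s => f (N + s)) t
  have hsplit : ∀ z, nodalNorm f (N + t) z = ‖z ^ N - c‖ * H z := fun z => by
    rw [nodalNorm_add, nodalNorm, ← norm_prod, hroots]
  have htwo : ‖-c - c‖ = 2 := by
    rw [← neg_add', norm_neg, ← two_mul, norm_mul, hc, mul_one, Complex.norm_two]
  obtain ⟨hmem, hleja⟩ := hf.2 (N + t) (by omega)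
  -- On the disk `‖z ^ N - c‖ ≤ 2`, with equality only where `z ^ N = -c`; the Leja inequality
  -- compared at `w` forces equality at `f (N + t)`.
  have hle : 2 * H w ≤ ‖f (N + t) ^ N - c‖ * H (f (N + t)) := by
    simpa only [Set.mem_ofPred_eq, hsplit, hwN, htwo] using hleja hw
  have h2 : 2 ≤ ‖f (N + t) ^ N - c‖ := le_of_mul_le_mul_right
    (hle.trans (mul_le_mul_of_nonneg_left (hmax hmem) (norm_nonneg _))) hpos
  have hfN := eq_neg_of_two_le_norm_sub
    (by rw [norm_pow]; exact pow_le_one₀ (norm_nonneg _) (mem_closedBall_zero_iff.1 hmem)) hc h2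
  rw [hfN, htwo] at hle
  exact ⟨hfN, fun z hz => (hmax hz).trans (le_of_mul_le_mul_left hle two_pos)⟩

def LejaPrefixesAreRotatedRoots (N : ℕ) : Prop :=
  ∀ f L, IsLejaPrefix f L → L ≤ N → (∀ m < L, f m ^ N = f 0 ^ N) ∧ Set.InjOn f (range L)

lemma IsLejaPrefix.exists_isMaxOn_pow_eq {h : ℕ → ℂ} {N t : ℕ}
    (hN : LejaPrefixesAreRotatedRoots N) (hh : IsLejaPrefix h t) (ht : t < N) :
    ∃ w ∈ closedBall (0 : ℂ) 1, w ^ N = h 0 ^ N ∧ IsMaxOn (nodalNorm h t) (closedBall 0 1) w ∧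
      0 < nodalNorm h t w := by
  rcases Nat.eq_zero_or_pos t with rfl | ht0
  · exact ⟨h 0, by simp [hh.1], rfl, isMaxOn_nodalNorm_zero _ _ _, by simp⟩
  obtain ⟨u, hu, hmax⟩ := (isCompact_closedBall (0 : ℂ) 1).exists_isMaxOn
    ⟨0, by simp⟩ (continuous_nodalNorm h t).continuousOn
  have hu' : u ^ N = h 0 ^ N := by
    simpa [Function.update_of_ne ht0.ne] using
      (hN _ _ (hh.update ht0.ne' hu hmax) ht).1 t (by omega)
  refine ⟨u, hu, hu', hmax, ?_⟩
  have h0 : h 0 ^ N ≠ 0 := pow_ne_zero _ (norm_ne_zero_iff.1 (hh.1 ▸ one_ne_zero))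
  have hne : ∀ s < t, h s ≠ 0 := fun s hs hs0 =>
    h0 (by rw [← (hN h t hh ht.le).1 s hs, hs0, zero_pow (by omega)])
  calc 0 < nodalNorm h t 0 := prod_pos fun s hs => by simpa using hne s (mem_range.1 hs)
    _ ≤ nodalNorm h t u := hmax (by simp)

lemma IsLejaPrefix.pow_eq_neg_and_isLejaPrefix_shift {f : ℕ → ℂ} {N L : ℕ}
    (hN : LejaPrefixesAreRotatedRoots N) (hf : IsLejaPrefix f L) (hNL : N < L) (hL : L ≤ 2 * N) :
    f N ^ N = -f 0 ^ N ∧ IsLejaPrefix (fun s => f (N + s)) (L - N) := by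
  have hN0 : N ≠ 0 := by omega
  obtain ⟨hpow, hinj⟩ := hN f N (hf.mono hNL.le) le_rfl
  have hc : ‖f 0 ^ N‖ = 1 := by rw [norm_pow, hf.1, one_pow]
  have hroots := prod_sub_eq_pow_sub hN0 hinj hpow
  obtain ⟨w, hw⟩ := IsAlgClosed.exists_pow_nat_eq (-f 0 ^ N) (Nat.pos_of_ne_zero hN0)
  have hw1 : ‖w‖ = 1 := norm_eq_one_of_pow_eq hN0 (by rwa [norm_neg]) hw
  have hfN : f N ^ N = -f 0 ^ N := by
    simpa using ((hf.mono (L' := N + 0 + 1) (by omega)).pow_eq_neg_of_isMaxOn hroots hc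
      (mem_closedBall_zero_iff.2 hw1.le) hw (isMaxOn_nodalNorm_zero _ _ _) (by simp)).1
  refine ⟨hfN, ?_⟩
  suffices ∀ t ≤ L - N, IsLejaPrefix (fun s => f (N + s)) t from this _ le_rfl
  intro t ht
  induction t with
  | zero => exact ⟨norm_eq_one_of_pow_eq hN0 (by rwa [norm_neg]) hfN, by simp⟩
  | succ t ih =>
    have hh := ih (by omega)
    obtain ⟨w, hw, hwN, hmax, hpos⟩ := hh.exists_isMaxOn_pow_eq hN (by omega)
    have := (hf.mono (by omega : N + t + 1 ≤ L)).pow_eq_neg_of_isMaxOn hroots hc hw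
      (hwN.trans (by simpa using hfN)) hmax hpos
    exact hh.succ (hf.2 (N + t) (by omega)).1 this.2

theorem lejaPrefixesAreRotatedRoots_two_pow (q : ℕ) : LejaPrefixesAreRotatedRoots (2 ^ q) := by
  induction q with
  | zero =>
    intro f L _ hL
    refine ⟨fun m hm => by rw [show m = 0 by omega], fun a ha b hb _ => ?_⟩
    simp only [coe_range, Set.mem_Iio] at ha hb
    omega
  | succ q ih =>
    set N := 2 ^ q
    intro f L hf hL
    rw [pow_succ'] at hL ⊢
    rcases le_or_gt L N with hLN | hNL
    · obtain ⟨hpow, hinj⟩ := ih f L hf hLN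
      exact ⟨fun m hm => by rw [pow_mul', pow_mul', hpow m hm], hinj⟩
    obtain ⟨hfN, hblock⟩ := hf.pow_eq_neg_and_isLejaPrefix_shift ih hNL hL
    obtain ⟨hlow, hinj⟩ := ih f N (hf.mono hNL.le) le_rfl
    obtain ⟨hpow', hinj'⟩ := ih _ _ hblock (by omega)
    have hhigh : ∀ m, N ≤ m → m < L → f m ^ N = -f 0 ^ N := fun m h1 h2 => by
      simpa [Nat.add_sub_cancel' h1, hfN] using hpow' (m - N) (by omega)
    have hne : f 0 ^ N ≠ -f 0 ^ N := by
      rw [ne_eq, CharZero.eq_neg_self_iff]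
      exact pow_ne_zero _ (norm_ne_zero_iff.1 (hf.1 ▸ one_ne_zero))
    refine ⟨fun m hm => ?_, fun a ha b hb hab => ?_⟩
    · rcases lt_or_ge m N with h | h
      · rw [pow_mul', pow_mul', hlow m h]
      · rw [pow_mul', pow_mul', hhigh m h hm, neg_sq]
    simp only [coe_range, Set.mem_Iio] at ha hb
    rcases lt_or_ge a N with haN | haN <;> rcases lt_or_ge b N with hbN | hbN
    · exact hinj (by simpa using haN) (by simpa using hbN) hab
    · exact absurd ((hlow a haN).symm.trans (hab ▸ hhigh b hbN hb)) hne
    · exact absurd ((hlow b hbN).symm.trans (hab ▸ hhigh a haN ha)) hne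
    · have := @hinj' (a - N) (by simp; omega) (b - N) (by simp; omega)
        (by simpa [Nat.add_sub_cancel' haN, Nat.add_sub_cancel' hbN] using hab)
      omega

lemma IsLejaSeq.image_range_two_pow {e : ℕ → ℂ} (he : IsLejaSeq e) (p : ℕ) :
    (range (2 ^ p)).image e = Polynomial.nthRootsFinset (2 ^ p) (1 : ℂ) := by
  obtain ⟨hpow, hinj⟩ := lejaPrefixesAreRotatedRoots_two_pow p e _ (he.isLejaPrefix _) le_rfl
  refine eq_of_subset_of_card_le (fun z hz => ?_) ?_
  · obtain ⟨m, hm, rfl⟩ := mem_image.1 hz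
    rw [Polynomial.mem_nthRootsFinset (by positivity), hpow m (mem_range.1 hm), he.1, one_pow]
  · rw [(Complex.isPrimitiveRoot_exp (2 ^ p) (by positivity)).card_nthRootsFinset,
      card_image_of_injOn hinj, card_range]

lemma IsLejaSeq.pow_eq_neg_one {e : ℕ → ℂ} (he : IsLejaSeq e) {p m : ℕ} (h1 : 2 ^ p ≤ m)
    (h2 : m < 2 ^ (p + 1)) : e m ^ 2 ^ p = -1 := by
  rw [pow_succ'] at h2
  obtain ⟨hN, hblock⟩ := (he.isLejaPrefix (m + 1)).pow_eq_neg_and_isLejaPrefix_shift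
    (lejaPrefixesAreRotatedRoots_two_pow p) (by omega) (by omega)
  have := (lejaPrefixesAreRotatedRoots_two_pow p _ _ hblock (by omega)).1 (m - 2 ^ p) (by omega)
  simpa [Nat.add_sub_cancel' h1, hN, he.1] using this

lemma count_forall_lt_ne_eq_card_image {α : Type*} [DecidableEq α] (v : ℕ → α) (M : ℕ) :
    Nat.count (fun m => ∀ s < m, v m ≠ v s) M = #((range M).image v) := by
  induction M with
  | zero => simp
  | succ M ih =>
    have hnew : (∀ s < M, v M ≠ v s) ↔ v M ∉ (range M).image v := by
      simp [eq_comm]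
    rw [Nat.count_succ, ih, range_add_one, image_insert, card_insert_eq_ite]
    by_cases h : v M ∈ (range M).image v <;> simp [h, hnew]

lemma StrictMono.lt_iff_lt_count {φ : ℕ → ℕ} (hφ : StrictMono φ) {p : ℕ → Prop}
    [DecidablePred p] (hp : ∀ m, m ∈ Set.range φ ↔ p m) (i M : ℕ) :
    φ i < M ↔ i < Nat.count p M := by
  have hcount : ∀ i, Nat.count p (φ i) = i := fun i => by
    rw [Nat.count_eq_card_filter_range]
    convert card_image_of_injective (range i) hφ.injective using 2
    · ext m
      simp only [mem_filter, mem_range, mem_image, ← hp]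
      constructor
      · rintro ⟨hm, k, rfl⟩
        exact ⟨k, hφ.lt_iff_lt.1 hm, rfl⟩
      · rintro ⟨k, hk, rfl⟩
        exact ⟨hφ hk, k, rfl⟩
    · simp
  constructor
  · intro h
    calc i < Nat.count p (φ i + 1) := by
          rw [Nat.count_succ, hcount, if_pos ((hp _).1 ⟨i, rfl⟩)]; omega
      _ ≤ Nat.count p M := Nat.count_monotone p h
  · intro h
    by_contra! hM
    have := Nat.count_monotone p hM
    rw [hcount] at this
    omega

lemma IsLejaSeq.count_forall_lt_re_ne {e : ℕ → ℂ} (he : IsLejaSeq e) (q : ℕ) :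
    Nat.count (fun m => ∀ s < m, (e m).re ≠ (e s).re) (2 ^ (q + 1)) = 2 ^ q + 1 := by
  rw [count_forall_lt_ne_eq_card_image (fun m => (e m).re), ← Function.comp_def Complex.re e,
    ← image_image, he.image_range_two_pow, pow_succ', image_re_nthRootsFinset (by positivity),
    card_lobatto]

theorem nodal_lobatto_quotient_bound_general (x : ℕ → ℝ) (hx : IsRLejaSeq x)
    (n k : ℕ) (hk2 : k ≤ 2 ^ (n + 1))
    (y : ℝ) (hy : y ∈ Set.Icc (-1 : ℝ) 1)
    (j : ℕ) (hj1 : 2 ^ n + 1 ≤ j) (hj2 : j ≤ k - 1) :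
    |∏ a ∈ lobatto (2 ^ n), (y - a)| / |∏ a ∈ lobatto (2 ^ n), (x j - a)| ≤
      1 / Real.sin (π / 2 ^ (n + 1)) := by
  obtain ⟨e, φ, he, hφ, hxe, hrange⟩ := hx
  have hφj : 2 ^ (n + 1) ≤ φ j ∧ φ j < 2 ^ (n + 1 + 1) := by
    rw [← not_lt, hφ.lt_iff_lt_count hrange, hφ.lt_iff_lt_count hrange, he.count_forall_lt_re_ne,
      he.count_forall_lt_re_ne]
    omega
  have hpow := he.pow_eq_neg_one hφj.1 hφj.2
  have hT : (T ℝ (2 * 2 ^ n : ℕ)).eval (x j) = -1 := by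
    rw [hxe, eval_T_real_re _ (norm_eq_one_of_pow_eq (by positivity) (by simp) hpow), ← pow_succ',
      hpow, Complex.neg_re, Complex.one_re]
  have hd : 2 ^ n ≠ 0 := by positivity
  have hsin : 0 < sin (π / (2 * 2 ^ n)) :=
    sin_pos_of_pos_of_lt_pi (by positivity) (div_lt_self pi_pos
      (by linarith [one_le_pow₀ (M₀ := ℝ) (n := n) one_le_two]))
  calc _ ≤ (1 / 2 ^ (2 ^ n - 1)) / (sin (π / (2 * 2 ^ n)) / 2 ^ (2 ^ n - 1)) :=
        div_le_div₀ (by positivity) (abs_prod_lobatto_sub_le hd hy) (by positivity)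
          (by exact_mod_cast sin_div_le_abs_prod_lobatto_sub hd hT)
    _ = 1 / sin (π / 2 ^ (n + 1)) := by
      rw [pow_succ']
      field_simp

theorem nodal_lobatto_quotient_bound (x : ℕ → ℝ) (hx : IsRLejaSeq x)
    (n k : ℕ) (hk1 : 2 ^ n + 1 < k) (hk2 : k ≤ 2 ^ (n + 1))
    (y : ℝ) (hy : y ∈ Set.Icc (-1 : ℝ) 1)
    (j : ℕ) (hj1 : 2 ^ n + 1 ≤ j) (hj2 : j ≤ k - 1) :
    |∏ a ∈ lobatto (2 ^ n), (y - a)| / |∏ a ∈ lobatto (2 ^ n), (x j - a)| ≤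
      1 / Real.sin (π / 2 ^ (n + 1)) :=
  nodal_lobatto_quotient_bound_general x hx n k hk2 y hy j hj1 hj2
end
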